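/- arXiv:2407.15595 — 5 statements merged into one kernel-verified Lean document; each statement's English description precedes it below -/
import Mathlib

section
/- (Conditional-to-marginal velocity) Let $p_t(x \mid x_0, x_1)$ be a differentiable-in-$t$ family of conditional PMFs on $\mathcal{D} = [d]^N$ and suppose the conditional velocities $u^i_t(x^i, z \mid x_0, x_1)$ satisfy the discrete continuity equation $\dot p_t(x \mid x_0, x_1) = \sum_{z \in \mathcal{D}} p_t(z \mid x_0, x_1) \sum_{i=1}^N \delta_z(x^{\bar i})\, u^i_t(x^i, z \mid x_0, x_1)$ for all $x, x_0, x_1$. Let $\pi$ be a PMF on $\mathcal{D}^2$, define the marginal path $p_t(x) = \sum_{x_0,x_1} p_t(x\mid x_0,x_1)\pi(x_0,x_1)$, and the marginal velocity $u^i_t(x^i, z) = \sum_{x_0,x_1} u^i_t(x^i, z \mid x_0, x_1)\, p_t(z \mid x_0, x_1)\pi(x_0,x_1)/p_t(z)$ for $z$ with $p_t(z)>0$ (and $0$ otherwise). If $p_t(z) > 0$ for all $z$, then the marginal velocity satisfies the continuity equation for the marginal path: $\dot p_t(x) = \sum_{z} p_t(z) \sum_{i=1}^N \delta_z(x^{\bar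 i})\, u^i_t(x^i, z)$. -/
/-!
The marginal path is a finite π-mixture of the conditional paths, so its derivative is the
π-average of the conditional right-hand sides. Because `p_t(z) ≠ 0`, the factor `p_t(z)` cancels
the denominator of the posterior-averaged velocity, leaving the π-average of the conditional
currents `p_t(z | x₀, x₁) u_t(·, z | x₀, x₁)`; exchanging the finite sums finishes the proof.
-/

open Finset

theorem marginal_flux_eq_sum_conditional_flux {K κ ι D : Type*} [Field K]
    [Fintype κ] [Fintype ι] [Fintype D]
    (p : κ → D → K) (π : κ → K) (g : ι → D → K) (u : κ → ι → D → K)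
    (hp : ∀ z, ∑ c, p c z * π c ≠ 0) :
    ∑ z, (∑ c, p c z * π c) * ∑ i, g i z * ((∑ c, u c i z * p c z * π c) / ∑ c, p c z * π c)
      = ∑ c, (∑ z, p c z * ∑ i, g i z * u c i z) * π c := by
  calc _ = ∑ z, ∑ i, ∑ c, g i z * (u c i z * p c z * π c) := by
        refine sum_congr rfl fun z _ => ?_
        rw [mul_sum]
        refine sum_congr rfl fun i _ => ?_
        rw [mul_left_comm, mul_div_cancel₀ _ (hp z), mul_sum]
    _ = ∑ c, ∑ z, ∑ i, g i z * (u c i z * p c z * π c) :=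
        (sum_congr rfl fun _ _ => sum_comm).trans sum_comm
    _ = _ := by
        simp only [mul_sum, sum_mul]
        refine sum_congr rfl fun c _ => sum_congr rfl fun z _ => sum_congr rfl fun i _ => ?_
        ring

theorem conditional_to_marginal_velocity_general (N d : ℕ)
    (pc : ℝ → (Fin N → Fin d) → (Fin N → Fin d) → (Fin N → Fin d) → ℝ)
    (uc : ℝ → (Fin N → Fin d) → (Fin N → Fin d) → Fin d → Fin N → (Fin N → Fin d) → ℝ)
    (π : (Fin N → Fin d) → (Fin N → Fin d) → ℝ)
    (t : ℝ)
    (hcont : ∀ (x x0 x1 : Fin N → Fin d),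
      HasDerivAt (fun s => pc s x0 x1 x)
        (∑ z : Fin N → Fin d, pc t x0 x1 z *
          ∑ i : Fin N,
            (∏ j ∈ Finset.univ \ {i}, if x j = z j then (1 : ℝ) else 0) *
              uc t x0 x1 (x i) i z) t)
    (hpos : ∀ z : Fin N → Fin d,
      0 < ∑ x0 : Fin N → Fin d, ∑ x1 : Fin N → Fin d, pc t x0 x1 z * π x0 x1) :
    ∀ x : Fin N → Fin d,
      HasDerivAt
        (fun s => ∑ x0 : Fin N → Fin d, ∑ x1 : Fin N → Fin d, pc s x0 x1 x * π x0 x1)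
        (∑ z : Fin N → Fin d,
          (∑ x0 : Fin N → Fin d, ∑ x1 : Fin N → Fin d, pc t x0 x1 z * π x0 x1) *
            ∑ i : Fin N,
              (∏ j ∈ Finset.univ \ {i}, if x j = z j then (1 : ℝ) else 0) *
                ((∑ x0 : Fin N → Fin d, ∑ x1 : Fin N → Fin d,
                    uc t x0 x1 (x i) i z * pc t x0 x1 z * π x0 x1) /
                  (∑ x0 : Fin N → Fin d, ∑ x1 : Fin N → Fin d, pc t x0 x1 z * π x0 x1)))
        t := by
  intro x
  refine (HasDerivAt.fun_sum fun x0 _ =>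
    HasDerivAt.fun_sum fun x1 _ => (hcont x x0 x1).mul_const (π x0 x1)).congr_deriv ?_
  have hflux := marginal_flux_eq_sum_conditional_flux
    (fun c : (Fin N → Fin d) × (Fin N → Fin d) => pc t c.1 c.2) (fun c => π c.1 c.2)
    (fun i z => ∏ j ∈ univ \ {i}, if x j = z j then (1 : ℝ) else 0)
    (fun c i z => uc t c.1 c.2 (x i) i z)
    (by simpa only [Fintype.sum_prod_type] using fun z => (hpos z).ne')
  simpa only [Fintype.sum_prod_type] using hflux.symm

/-- Theorem 1 (conditional-to-marginal velocity): if each conditional velocity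
satisfies the discrete continuity equation for its conditional path, then the
posterior-weighted marginal velocity satisfies the continuity equation for the
marginal path, provided `p_t(z) > 0` everywhere. -/
theorem conditional_to_marginal_velocity (N d : ℕ) (hN : 1 ≤ N) (hd : 1 ≤ d)
    (pc : ℝ → (Fin N → Fin d) → (Fin N → Fin d) → (Fin N → Fin d) → ℝ)
    (uc : ℝ → (Fin N → Fin d) → (Fin N → Fin d) → Fin d → Fin N → (Fin N → Fin d) → ℝ)
    (π : (Fin N → Fin d) → (Fin N → Fin d) → ℝ)
    (t : ℝ)
    (hcont : ∀ (x x0 x1 : Fin N → Fin d),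
      HasDerivAt (fun s => pc s x0 x1 x)
        (∑ z : Fin N → Fin d, pc t x0 x1 z *
          ∑ i : Fin N,
            (∏ j ∈ Finset.univ \ {i}, if x j = z j then (1 : ℝ) else 0) *
              uc t x0 x1 (x i) i z) t)
    (hpos : ∀ z : Fin N → Fin d,
      0 < ∑ x0 : Fin N → Fin d, ∑ x1 : Fin N → Fin d, pc t x0 x1 z * π x0 x1) :
    ∀ x : Fin N → Fin d,
      HasDerivAt
        (fun s => ∑ x0 : Fin N → Fin d, ∑ x1 : Fin N → Fin d, pc s x0 x1 x * π x0 x1)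
        (∑ z : Fin N → Fin d,
          (∑ x0 : Fin N → Fin d, ∑ x1 : Fin N → Fin d, pc t x0 x1 z * π x0 x1) *
            ∑ i : Fin N,
              (∏ j ∈ Finset.univ \ {i}, if x j = z j then (1 : ℝ) else 0) *
                ((∑ x0 : Fin N → Fin d, ∑ x1 : Fin N → Fin d,
                    uc t x0 x1 (x i) i z * pc t x0 x1 z * π x0 x1) /
                  (∑ x0 : Fin N → Fin d, ∑ x1 : Fin N → Fin d, pc t x0 x1 z * π x0 x1)))
        t :=
  conditional_to_marginal_velocity_general N d pc uc π t hcont hpos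
end

section
/- (Velocity of general convex-mixture conditional paths) Fix $t$ and let $p(x^i) = \sum_{j=1}^m \kappa^j w^j(x^i)$ where each $w^j$ is a PMF on $[d]$, $\kappa^j \geq 0$, $\sum_j \kappa^j = 1$. Suppose scheduler derivatives $\dot\kappa^j$ satisfy $\sum_j \dot\kappa^j = 0$, each $\kappa^j > 0$, and let $\ell = \arg\min_j \dot\kappa^j/\kappa^j$. Define $u(x^i, z) = \sum_{j=1}^m (\dot\kappa^j - \kappa^j \dot\kappa^\ell/\kappa^\ell)\, w^j(x^i) + (\dot\kappa^\ell/\kappa^\ell)\, \delta_z(x^i)$. Then (a) $\sum_{x^i \in [d]} u(x^i, z) = 0$ for every $z^i$, and (b) $u(x^i, z) \geq 0$ whenever $x^i \neq z^i$. -/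
open Finset

/-- Theorem 2, single-coordinate core: the velocity of a general convex-mixture
conditional path satisfies the rate conditions. -/
theorem mixture_velocity_rate_conditions (d m : ℕ) (hd : 1 ≤ d) (hm : 1 ≤ m)
    (κ dκ : Fin m → ℝ) (w : Fin m → Fin d → ℝ)
    (hw0 : ∀ j a, 0 ≤ w j a) (hw1 : ∀ j, ∑ a, w j a = 1)
    (hκpos : ∀ j, 0 < κ j) (hκ1 : ∑ j, κ j = 1) (hdκ : ∑ j, dκ j = 0)
    (ℓ : Fin m) (hℓ : ∀ j, dκ ℓ / κ ℓ ≤ dκ j / κ j) :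
    ∀ z : Fin d,
      (∑ a : Fin d,
          (∑ j, (dκ j - κ j * (dκ ℓ / κ ℓ)) * w j a +
            (dκ ℓ / κ ℓ) * (if a = z then (1 : ℝ) else 0)) = 0) ∧
      ∀ a : Fin d, a ≠ z →
        0 ≤ ∑ j, (dκ j - κ j * (dκ ℓ / κ ℓ)) * w j a +
            (dκ ℓ / κ ℓ) * (if a = z then (1 : ℝ) else 0) := by
  intro z
  set r := dκ ℓ / κ ℓ with hr
  constructor
  · rw [Finset.sum_add_distrib, Finset.sum_comm]
    have h1 : ∀ j, ∑ a : Fin d, (dκ j - κ j * r) * w j a = dκ j - κ j * r := by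
      intro j
      rw [← Finset.mul_sum, hw1, mul_one]
    simp only [h1]
    rw [Finset.sum_sub_distrib, hdκ, ← Finset.mul_sum, ← Finset.sum_mul, hκ1,
      Finset.sum_ite_eq' univ z, if_pos (Finset.mem_univ z)]
    ring
  · intro a ha
    rw [if_neg ha, mul_zero, add_zero]
    apply Finset.sum_nonneg
    intro j _
    apply mul_nonneg _ (hw0 j a)
    have h : r * κ j ≤ dκ j := (le_div_iff₀ (hκpos j)).mp (hℓ j)
    nlinarith
end

section
/- (Time derivative of mixture path matches the velocity) With notation as above, let $p_t(x^i) = \sum_{j=1}^m \kappa^j_t w^j(x^i)$ be a one-dimensional conditional path with differentiable schedulers $\kappa^j_t > 0$ summing to 1, and define $u_t(x^i, z^i) = \sum_j a^j_t w^j(x^i) + b_t \delta_{z^i}(x^i)$ with $a^j_t = \dot\kappa^j_t - \kappa^j_t \dot\kappa^\ell_t/\kappa^\ell_t$, $b_t = \dot\kappa^\ell_t/\kappa^\ell_t$, $\ell = \arg\min_j \dot\kappa^j_t/\kappa^j_t$. Then $\dot p_t(x^i) = \sum_{z^i \in [d]} p_t(z^i)\, u_t(x^i, z^i)$. -/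
open Finset

/-!
The velocity field splits into a part independent of `z` and a multiple of the Kronecker delta.
Averaging it against `p_t`, which has total mass one, gives `∑ⱼ aʲ wʲ(x) + b p_t(x)`, and the
`b κʲ` terms cancel against those inside `aʲ`, leaving `∑ⱼ κ̇ʲ wʲ(x) = ṗ_t(x)`.
-/

section

variable {ι α R : Type*} [Fintype ι] [Fintype α]

theorem sum_mul_add_mul_ite_eq [CommSemiring R] [DecidableEq ι] (p : ι → R) (a b : R) (x : ι) :
    ∑ z, p z * (a + b * if x = z then 1 else 0) = a * ∑ z, p z + b * p x := by
  simp only [mul_add, sum_add_distrib, mul_ite, mul_one, mul_zero, sum_ite_eq, mem_univ,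
    if_true, ← sum_mul]
  ring

theorem sum_sum_mul_eq_one [CommSemiring R] (c : ι → R) (w : ι → α → R)
    (hc : ∑ j, c j = 1) (hw : ∀ j, ∑ z, w j z = 1) :
    ∑ z, ∑ j, c j * w j z = 1 := by
  rw [sum_comm]
  simp only [← mul_sum, hw, mul_one, hc]

theorem hasDerivAt_sum_mul_const {𝕜 : Type*} [NontriviallyNormedField 𝕜]
    (c : ι → 𝕜 → 𝕜) (c' w : ι → 𝕜) (t : 𝕜) (hc : ∀ j, HasDerivAt (c j) (c' j) t) :
    HasDerivAt (fun s => ∑ j, c j s * w j) (∑ j, c' j * w j) t :=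
  HasDerivAt.fun_sum fun j _ => (hc j).mul_const (w j)

end

theorem mixture_path_continuity_general (d m : ℕ)
    (κ : Fin m → ℝ → ℝ) (dκ : Fin m → ℝ) (w : Fin m → Fin d → ℝ) (t : ℝ)
    (hw1 : ∀ j, ∑ a, w j a = 1)
    (hderiv : ∀ j, HasDerivAt (κ j) (dκ j) t)
    (hκ1 : ∑ j, κ j t = 1)
    (ℓ : Fin m) :
    ∀ x : Fin d,
      HasDerivAt (fun s => ∑ j, κ j s * w j x)
        (∑ z : Fin d, (∑ j, κ j t * w j z) *
          (∑ j, (dκ j - κ j t * (dκ ℓ / κ ℓ t)) * w j x +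
            (dκ ℓ / κ ℓ t) * (if x = z then (1 : ℝ) else 0))) t := by
  intro x
  set b := dκ ℓ / κ ℓ t
  have hvelocity : ∑ j, (dκ j - κ j t * b) * w j x + b * ∑ j, κ j t * w j x
      = ∑ j, dκ j * w j x := by
    rw [mul_sum, ← sum_add_distrib]
    exact sum_congr rfl fun j _ => by ring
  rw [sum_mul_add_mul_ite_eq, sum_sum_mul_eq_one _ _ hκ1 hw1, mul_one, hvelocity]
  exact hasDerivAt_sum_mul_const _ _ _ t hderiv

/-- Theorem 2, single-coordinate continuity equation: the time derivative of the
mixture path `p_t(x) = ∑_j κ_t^j w^j(x)` equals `∑_z p_t(z) u_t(x, z)` with the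
velocity `u_t(x,z) = ∑_j a_t^j w^j(x) + b_t δ_z(x)`. -/
theorem mixture_path_continuity (d m : ℕ) (hd : 1 ≤ d) (hm : 1 ≤ m)
    (κ : Fin m → ℝ → ℝ) (dκ : Fin m → ℝ) (w : Fin m → Fin d → ℝ) (t : ℝ)
    (hw0 : ∀ j a, 0 ≤ w j a) (hw1 : ∀ j, ∑ a, w j a = 1)
    (hderiv : ∀ j, HasDerivAt (κ j) (dκ j) t)
    (hκpos : ∀ j, 0 < κ j t) (hκ1 : ∑ j, κ j t = 1)
    (ℓ : Fin m) (hℓ : ∀ j, dκ ℓ / κ ℓ t ≤ dκ j / κ j t) :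
    ∀ x : Fin d,
      HasDerivAt (fun s => ∑ j, κ j s * w j x)
        (∑ z : Fin d, (∑ j, κ j t * w j z) *
          (∑ j, (dκ j - κ j t * (dκ ℓ / κ ℓ t)) * w j x +
            (dκ ℓ / κ ℓ t) * (if x = z then (1 : ℝ) else 0))) t :=
  mixture_path_continuity_general d m κ dκ w t hw1 hderiv hκ1 ℓ
end

section
/- (Simplified backward velocity for i.i.d. source) Let the coupling be independent, $\pi(x_0, x_1) = p(x_0)q(x_1)$ with i.i.d. source $p(x_0) = \prod_{i=1}^N p(x_0^i)$, and conditional path $p_t(x \mid x_0, x_1) = \prod_i \big(\kappa_t \delta_{x_1^i}(x^i) + (1-\kappa_t)\delta_{x_0^i}(x^i)\big)$. Define $\check u(x^i, z) = \frac{\dot\kappa_t}{\kappa_t}(\delta_{z^i}(x^i) - p(x^i))$ and $\check u^\star(x^i, z) = \frac{\dot\kappa_t}{\kappa_t}(\delta_{z^i}(x^i) - p_{0|t}(x^i \mid z))$ where $p_{0|t}(x^i\mid z) = \sum_{x_0,x_1}\delta_{x_0^i}(x^i)\, p_t(z\mid x_0,x_1)\pi(x_0,x_1)/p_t(z)$.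 Then the divergence of their difference vanishes: $\mathrm{div}_x\big(p_t(\check u - \check u^\star)\big) = 0$ for all $x$, assuming $p_t(z) > 0$ for all $z$. -/
open Finset

/-- Conditional path `p_t(x|x₀,x₁) = ∏ᵢ (κ δ_{x₁ⁱ}(xⁱ) + (1-κ) δ_{x₀ⁱ}(xⁱ))`. -/
noncomputable def dfmCondPath (N d : ℕ) (κ : ℝ) (x0 x1 x : Fin N → Fin d) : ℝ :=
  ∏ i, (κ * (if x i = x1 i then (1 : ℝ) else 0) +
    (1 - κ) * (if x i = x0 i then (1 : ℝ) else 0))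

/-- Independent coupling with i.i.d.-per-coordinate source:
`π(x₀,x₁) = (∏ᵢ p(x₀ⁱ)) q(x₁)`. -/
noncomputable def dfmCoupling (N d : ℕ) (psrc : Fin N → Fin d → ℝ)
    (q : (Fin N → Fin d) → ℝ) (x0 x1 : Fin N → Fin d) : ℝ :=
  (∏ i, psrc i (x0 i)) * q x1

/-- Marginal path `p_t(z) = ∑_{x₀,x₁} p_t(z|x₀,x₁) π(x₀,x₁)`. -/
noncomputable def dfmMarginal (N d : ℕ) (κ : ℝ) (psrc : Fin N → Fin d → ℝ)
    (q : (Fin N → Fin d) → ℝ) (z : Fin N → Fin d) : ℝ :=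
  ∑ x0 : Fin N → Fin d, ∑ x1 : Fin N → Fin d,
    dfmCondPath N d κ x0 x1 z * dfmCoupling N d psrc q x0 x1

/-- Probability noise-prediction posterior
`p_{0|t}(xⁱ|z) = ∑_{x₀,x₁} δ_{x₀ⁱ}(xⁱ) p_t(z|x₀,x₁) π(x₀,x₁) / p_t(z)`. -/
noncomputable def dfmNoisePosterior (N d : ℕ) (κ : ℝ) (psrc : Fin N → Fin d → ℝ)
    (q : (Fin N → Fin d) → ℝ) (i : Fin N) (a : Fin d) (z : Fin N → Fin d) : ℝ :=
  (∑ x0 : Fin N → Fin d, ∑ x1 : Fin N → Fin d,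
    (if x0 i = a then (1 : ℝ) else 0) * dfmCondPath N d κ x0 x1 z *
      dfmCoupling N d psrc q x0 x1) / dfmMarginal N d κ psrc q z

/-! ### Auxiliary lemmas -/

/-- Summing a function against the off-`i` indicator product is the same as
summing over the value of the `i`-th coordinate. -/
lemma dfm_sum_update {N d : ℕ} (i : Fin N) (x : Fin N → Fin d)
    (F : (Fin N → Fin d) → ℝ) :
    ∑ z : Fin N → Fin d,
      (∏ j ∈ Finset.univ \ {i}, if x j = z j then (1 : ℝ) else 0) * F z
      = ∑ b : Fin d, F (Function.update x i b) := by
  have hprod : ∀ z : Fin N → Fin d,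
      (∏ j ∈ Finset.univ \ {i}, if x j = z j then (1 : ℝ) else 0)
        = if Function.update x i (z i) = z then 1 else 0 := by
    intro z
    rw [Finset.prod_boole]
    congr 1
    simp only [eq_iff_iff]
    constructor
    · intro h
      funext j
      by_cases hj : j = i
      · subst hj; simp
      · rw [Function.update_of_ne hj]
        exact h j (by simp [hj])
    · intro h j hj
      simp only [Finset.mem_sdiff, Finset.mem_singleton, Finset.mem_univ, true_and] at hj
      have := congrFun h j
      rwa [Function.update_of_ne hj] at this
  simp_rw [hprod, ite_mul, one_mul, zero_mul, ← Finset.sum_filter]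
  have himg : Finset.univ.filter (fun z : Fin N → Fin d => Function.update x i (z i) = z)
      = Finset.univ.image (fun b : Fin d => Function.update x i b) := by
    ext z
    simp only [Finset.mem_filter, Finset.mem_univ, true_and, Finset.mem_image]
    constructor
    · intro h; exact ⟨z i, h⟩
    · rintro ⟨b, rfl⟩
      simp
  rw [himg, Finset.sum_image]
  intro b _ b' _ h
  have := congrFun h i
  simpa using this

/-- The coordinate-swap involution on `Fin d × (Fin N → Fin d)`. -/
def dfmSwap {N d : ℕ} (i : Fin N) :
    (Fin d × (Fin N → Fin d)) ≃ (Fin d × (Fin N → Fin d)) where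
  toFun p := (p.2 i, Function.update p.2 i p.1)
  invFun p := (p.2 i, Function.update p.2 i p.1)
  left_inv p := by simp [Function.update_idem]
  right_inv p := by simp [Function.update_idem]

/-- Double-counting: weights at coordinate `i` can be exchanged against a
function invariant under updating coordinate `i`. -/
lemma dfm_swap_weight {N d : ℕ} (i : Fin N) (w w' : Fin d → ℝ)
    (G : (Fin N → Fin d) → ℝ) (hG : ∀ y b, G (Function.update y i b) = G y) :
    (∑ b, w' b) * ∑ y : Fin N → Fin d, w (y i) * G y
      = (∑ b, w b) * ∑ y : Fin N → Fin d, w' (y i) * G y := by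
  have h1 : (∑ b, w' b) * ∑ y : Fin N → Fin d, w (y i) * G y
      = ∑ p : Fin d × (Fin N → Fin d), w' p.1 * (w (p.2 i) * G p.2) := by
    rw [Fintype.sum_prod_type, Finset.sum_mul]
    exact Finset.sum_congr rfl fun b _ => Finset.mul_sum _ _ _
  have h2 : (∑ b, w b) * ∑ y : Fin N → Fin d, w' (y i) * G y
      = ∑ p : Fin d × (Fin N → Fin d), w p.1 * (w' (p.2 i) * G p.2) := by
    rw [Fintype.sum_prod_type, Finset.sum_mul]
    exact Finset.sum_congr rfl fun b _ => Finset.mul_sum _ _ _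
  rw [h1, h2, ← Equiv.sum_comp (dfmSwap i)
    (fun p : Fin d × (Fin N → Fin d) => w p.1 * (w' (p.2 i) * G p.2))]
  apply Finset.sum_congr rfl
  intro p _
  simp only [dfmSwap, Equiv.coe_fn_mk, Function.update_self, hG]
  ring

/-- Summing the conditional path over the value of coordinate `i` removes the
`i`-th factor. -/
lemma dfm_condPath_update_sum {N d : ℕ} (κ : ℝ) (i : Fin N)
    (x x0 x1 : Fin N → Fin d) :
    ∑ b : Fin d, dfmCondPath N d κ x0 x1 (Function.update x i b)
      = (κ + (1 - κ)) * ∏ j ∈ Finset.univ \ {i},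
          (κ * (if x j = x1 j then (1 : ℝ) else 0) +
            (1 - κ) * (if x j = x0 j then (1 : ℝ) else 0)) := by
  unfold dfmCondPath
  have hsplit : ∀ b : Fin d,
      (∏ j, (κ * (if Function.update x i b j = x1 j then (1 : ℝ) else 0) +
        (1 - κ) * (if Function.update x i b j = x0 j then (1 : ℝ) else 0)))
      = (κ * (if b = x1 i then (1 : ℝ) else 0) +
          (1 - κ) * (if b = x0 i then (1 : ℝ) else 0)) *
        ∏ j ∈ Finset.univ \ {i},
          (κ * (if x j = x1 j then (1 : ℝ) else 0) +
            (1 - κ) * (if x j = x0 j then (1 : ℝ) else 0)) := by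
    intro b
    rw [← Finset.mul_prod_erase Finset.univ _ (Finset.mem_univ i), Finset.erase_eq]
    congr 1
    · simp
    · apply Finset.prod_congr rfl
      intro j hj
      simp only [Finset.mem_sdiff, Finset.mem_singleton, Finset.mem_univ, true_and] at hj
      rw [Function.update_of_ne hj]
  simp_rw [hsplit]
  rw [← Finset.sum_mul]
  congr 1
  rw [Finset.sum_add_distrib, ← Finset.mul_sum, ← Finset.mul_sum]
  congr 1 <;> simp [Finset.sum_ite_eq']

/-- The key identity: summing the posterior numerator against the off-`i`
indicator equals `psrc i (x i)` times the analogous sum of the marginal. -/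
lemma dfm_key {N d : ℕ} (psrc : Fin N → Fin d → ℝ) (q : (Fin N → Fin d) → ℝ)
    (hpsrc1 : ∀ i, ∑ a, psrc i a = 1) (κ : ℝ) (i : Fin N) (x : Fin N → Fin d) :
    ∑ z : Fin N → Fin d,
      (∏ j ∈ Finset.univ \ {i}, if x j = z j then (1 : ℝ) else 0) *
        (∑ x0 : Fin N → Fin d, ∑ x1 : Fin N → Fin d,
          (if x0 i = x i then (1 : ℝ) else 0) * dfmCondPath N d κ x0 x1 z *
            dfmCoupling N d psrc q x0 x1)
      = psrc i (x i) * ∑ z : Fin N → Fin d,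
          (∏ j ∈ Finset.univ \ {i}, if x j = z j then (1 : ℝ) else 0) *
            dfmMarginal N d κ psrc q z := by
  rw [dfm_sum_update, dfm_sum_update]
  unfold dfmMarginal
  -- C abbreviates the off-i product of conditional-path factors
  set C : (Fin N → Fin d) → (Fin N → Fin d) → ℝ := fun x0 x1 =>
    ∏ j ∈ Finset.univ \ {i},
      (κ * (if x j = x1 j then (1 : ℝ) else 0) +
        (1 - κ) * (if x j = x0 j then (1 : ℝ) else 0)) with hC
  have hL : ∑ b : Fin d, (∑ x0 : Fin N → Fin d, ∑ x1 : Fin N → Fin d,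
      (if x0 i = x i then (1 : ℝ) else 0) *
        dfmCondPath N d κ x0 x1 (Function.update x i b) *
          dfmCoupling N d psrc q x0 x1)
      = ∑ x0 : Fin N → Fin d, ∑ x1 : Fin N → Fin d,
        (if x0 i = x i then (1 : ℝ) else 0) * ((κ + (1 - κ)) * C x0 x1) *
          dfmCoupling N d psrc q x0 x1 := by
    rw [Finset.sum_comm]
    apply Finset.sum_congr rfl
    intro x0 _
    rw [Finset.sum_comm]
    apply Finset.sum_congr rfl
    intro x1 _
    simp_rw [mul_assoc, ← Finset.mul_sum, mul_comm (dfmCondPath N d κ x0 x1 _),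
      ← Finset.mul_sum]
    rw [dfm_condPath_update_sum]
    ring
  have hR : ∑ b : Fin d, (∑ x0 : Fin N → Fin d, ∑ x1 : Fin N → Fin d,
      dfmCondPath N d κ x0 x1 (Function.update x i b) *
        dfmCoupling N d psrc q x0 x1)
      = ∑ x0 : Fin N → Fin d, ∑ x1 : Fin N → Fin d,
        ((κ + (1 - κ)) * C x0 x1) * dfmCoupling N d psrc q x0 x1 := by
    rw [Finset.sum_comm]
    apply Finset.sum_congr rfl
    intro x0 _
    rw [Finset.sum_comm]
    apply Finset.sum_congr rfl
    intro x1 _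
    simp_rw [mul_comm (dfmCondPath N d κ x0 x1 _), ← Finset.mul_sum]
    rw [dfm_condPath_update_sum]
    ring
  rw [hL, hR]
  -- put the x1 sum outside on both sides
  rw [Finset.sum_comm]
  conv_rhs => rw [Finset.sum_comm, Finset.mul_sum]
  apply Finset.sum_congr rfl
  intro x1 _
  -- apply the double-counting lemma coordinatewise
  set G : (Fin N → Fin d) → ℝ := fun x0 =>
    ((κ + (1 - κ)) * C x0 x1) *
      ((∏ j ∈ Finset.univ \ {i}, psrc j (x0 j)) * q x1) with hGdef
  have hG : ∀ y b, G (Function.update y i b) = G y := by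
    intro y b
    have h1 : C (Function.update y i b) x1 = C y x1 := by
      apply Finset.prod_congr rfl
      intro j hj
      simp only [Finset.mem_sdiff, Finset.mem_singleton, Finset.mem_univ, true_and] at hj
      rw [Function.update_of_ne hj]
    have h2 : (∏ j ∈ Finset.univ \ {i}, psrc j (Function.update y i b j))
        = ∏ j ∈ Finset.univ \ {i}, psrc j (y j) := by
      apply Finset.prod_congr rfl
      intro j hj
      simp only [Finset.mem_sdiff, Finset.mem_singleton, Finset.mem_univ, true_and] at hj
      rw [Function.update_of_ne hj]
    simp only [hGdef, h1, h2]
  have hfull : ∀ x0 : Fin N → Fin d,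
      (∏ j, psrc j (x0 j)) = psrc i (x0 i) * ∏ j ∈ Finset.univ \ {i}, psrc j (x0 j) := by
    intro x0
    rw [← Finset.mul_prod_erase Finset.univ _ (Finset.mem_univ i), Finset.erase_eq]
  have hLHS : ∑ x0 : Fin N → Fin d,
      (if x0 i = x i then (1 : ℝ) else 0) * ((κ + (1 - κ)) * C x0 x1) *
        dfmCoupling N d psrc q x0 x1
      = ∑ y : Fin N → Fin d,
        ((if y i = x i then (1 : ℝ) else 0) * psrc i (y i)) * G y := by
    apply Finset.sum_congr rfl
    intro x0 _
    unfold dfmCoupling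
    rw [hfull x0]
    simp only [hGdef]
    ring
  have hRHS : ∑ x0 : Fin N → Fin d,
      ((κ + (1 - κ)) * C x0 x1) * dfmCoupling N d psrc q x0 x1
      = ∑ y : Fin N → Fin d, psrc i (y i) * G y := by
    apply Finset.sum_congr rfl
    intro x0 _
    unfold dfmCoupling
    rw [hfull x0]
    simp only [hGdef]
    ring
  rw [hLHS, hRHS]
  have := dfm_swap_weight i (fun b => (if b = x i then (1 : ℝ) else 0) * psrc i b)
    (psrc i) G hG
  rw [hpsrc1 i, one_mul] at this
  rw [this]
  congr 1
  simp [ite_mul, Finset.sum_ite_eq']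

/-- For independent coupling with i.i.d. source, the simplified backward velocity
`ǔ(xⁱ,z) = (κ̇/κ)(δ_{zⁱ}(xⁱ) - p(xⁱ))` and the posterior-based one
`ǔ⋆(xⁱ,z) = (κ̇/κ)(δ_{zⁱ}(xⁱ) - p_{0|t}(xⁱ|z))` have fluxes whose difference is
divergence free. -/
theorem simplified_backward_velocity_div_free (N d : ℕ) (hN : 1 ≤ N) (hd : 1 ≤ d)
    (psrc : Fin N → Fin d → ℝ) (q : (Fin N → Fin d) → ℝ)
    (hpsrc0 : ∀ i a, 0 ≤ psrc i a) (hpsrc1 : ∀ i, ∑ a, psrc i a = 1)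
    (hq0 : ∀ x1, 0 ≤ q x1) (hq1 : ∑ x1, q x1 = 1)
    (κ dκ : ℝ) (hκ : κ ∈ Set.Ioo (0 : ℝ) 1)
    (hpos : ∀ z, 0 < dfmMarginal N d κ psrc q z) :
    ∀ x : Fin N → Fin d,
      ∑ z : Fin N → Fin d, dfmMarginal N d κ psrc q z *
        ∑ i : Fin N,
          (∏ j ∈ Finset.univ \ {i}, if x j = z j then (1 : ℝ) else 0) *
            ((dκ / κ * ((if x i = z i then (1 : ℝ) else 0) - psrc i (x i))) -
              (dκ / κ * ((if x i = z i then (1 : ℝ) else 0) -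
                dfmNoisePosterior N d κ psrc q i (x i) z)))
      = 0 := by
  intro x
  have hMpost : ∀ (i : Fin N) (z : Fin N → Fin d),
      dfmMarginal N d κ psrc q z * dfmNoisePosterior N d κ psrc q i (x i) z
        = ∑ x0 : Fin N → Fin d, ∑ x1 : Fin N → Fin d,
            (if x0 i = x i then (1 : ℝ) else 0) * dfmCondPath N d κ x0 x1 z *
              dfmCoupling N d psrc q x0 x1 := by
    intro i z
    unfold dfmNoisePosterior
    rw [mul_comm, div_mul_cancel₀ _ (ne_of_gt (hpos z))]
  simp_rw [Finset.mul_sum]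
  rw [Finset.sum_comm]
  apply Finset.sum_eq_zero
  intro i _
  have hterm : ∀ z : Fin N → Fin d,
      dfmMarginal N d κ psrc q z *
        ((∏ j ∈ Finset.univ \ {i}, if x j = z j then (1 : ℝ) else 0) *
          ((dκ / κ * ((if x i = z i then (1 : ℝ) else 0) - psrc i (x i))) -
            (dκ / κ * ((if x i = z i then (1 : ℝ) else 0) -
              dfmNoisePosterior N d κ psrc q i (x i) z))))
      = dκ / κ *
          ((∏ j ∈ Finset.univ \ {i}, if x j = z j then (1 : ℝ) else 0) *
            (∑ x0 : Fin N → Fin d, ∑ x1 : Fin N → Fin d,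
              (if x0 i = x i then (1 : ℝ) else 0) * dfmCondPath N d κ x0 x1 z *
                dfmCoupling N d psrc q x0 x1))
        - (dκ / κ * psrc i (x i)) *
          ((∏ j ∈ Finset.univ \ {i}, if x j = z j then (1 : ℝ) else 0) *
            dfmMarginal N d κ psrc q z) := by
    intro z
    rw [← hMpost i z]
    ring
  rw [Finset.sum_congr rfl fun z _ => hterm z, Finset.sum_sub_distrib,
    ← Finset.mul_sum, ← Finset.mul_sum, dfm_key psrc q hpsrc1 κ i x]
  ring
end

section
/- (Transition kernel from velocity update is stochastic and preserves $p_t$ under zero divergence) Let $p$ be a strictly positive PMF on $\mathcal{D} = [d]^N$ and $\bar u^i(x^i, z)$ satisfy $\sum_{x^i} \bar u^i(x^i, z) = 0$, $\bar u^i(x^i, z) \geq 0$ for $x^i \neq z^i$, and $\mathrm{div}_x(p\,\bar u) = 0$ for all $x$. Define $P(x \mid z) = \delta_z(x) + h \sum_{i=1}^N \delta_z(x^{\bar i})\,\bar u^i(x^i, z)$. Then for sufficiently small $h > 0$: (a) $P(\cdot \mid z)$ is a PMF on $\mathcal{D}$ for each $z$, and (b) $p$ is stationary for $P$: $\sum_z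 P(x \mid z)\, p(z) = p(x)$ for all $x$. -/
open Finset

/-- Theorem 3 (ii), stationarity: if `ū` satisfies the rate conditions and the
flux `p ū` is divergence free, then for sufficiently small `h > 0` the Euler
update kernel `P(x|z) = δ_z(x) + h ∑ᵢ δ_z(x^ī) ūⁱ(xⁱ, z)` is a stochastic
kernel with `p` as a stationary distribution. -/
theorem corrector_kernel_stochastic_and_stationary (N d : ℕ) (hN : 1 ≤ N) (hd : 1 ≤ d)
    (p : (Fin N → Fin d) → ℝ) (hp0 : ∀ z, 0 < p z) (hp1 : ∑ z, p z = 1)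
    (u : Fin d → Fin N → (Fin N → Fin d) → ℝ)
    (hsum : ∀ (z : Fin N → Fin d) (i : Fin N), ∑ a, u a i z = 0)
    (hpos : ∀ (z : Fin N → Fin d) (i : Fin N) (a : Fin d), a ≠ z i → 0 ≤ u a i z)
    (hdiv : ∀ x : Fin N → Fin d,
      ∑ z : Fin N → Fin d, p z * ∑ i : Fin N,
        (∏ j ∈ Finset.univ \ {i}, if x j = z j then (1 : ℝ) else 0) * u (x i) i z
      = 0) :
    ∃ h₀ > (0 : ℝ), ∀ h : ℝ, 0 < h → h ≤ h₀ →
      (∀ z : Fin N → Fin d,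
        (∀ x : Fin N → Fin d,
          0 ≤ (if x = z then (1 : ℝ) else 0) +
            h * ∑ i : Fin N,
              (∏ j ∈ Finset.univ \ {i}, if x j = z j then (1 : ℝ) else 0) * u (x i) i z) ∧
        ∑ x : Fin N → Fin d,
          ((if x = z then (1 : ℝ) else 0) +
            h * ∑ i : Fin N,
              (∏ j ∈ Finset.univ \ {i}, if x j = z j then (1 : ℝ) else 0) * u (x i) i z)
          = 1) ∧
      ∀ x : Fin N → Fin d,
        ∑ z : Fin N → Fin d,
          ((if x = z then (1 : ℝ) else 0) +
            h * ∑ i : Fin N,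
              (∏ j ∈ Finset.univ \ {i}, if x j = z j then (1 : ℝ) else 0) * u (x i) i z)
            * p z
        = p x := by
  classical
  -- Key summation lemma: summing the indicator product over all x yields ∑ a, g a.
  have key : ∀ (z : Fin N → Fin d) (i : Fin N) (g : Fin d → ℝ),
      ∑ x : Fin N → Fin d,
        (∏ j ∈ Finset.univ \ {i}, if x j = z j then (1 : ℝ) else 0) * g (x i)
      = ∑ a, g a := by
    intro z i g
    have hinj : Function.Injective (fun a : Fin d => Function.update z i a) := by
      intro a b hab
      have := congrFun hab i
      simpa using this
    have himg : ∑ x ∈ Finset.image (fun a : Fin d => Function.update z i a) Finset.univ,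
        (∏ j ∈ Finset.univ \ {i}, if x j = z j then (1 : ℝ) else 0) * g (x i)
        = ∑ a, g a := by
      rw [Finset.sum_image (fun a _ b _ hab => hinj hab)]
      refine Finset.sum_congr rfl fun a _ => ?_
      have h1 : (∏ j ∈ Finset.univ \ {i},
          if Function.update z i a j = z j then (1 : ℝ) else 0) = 1 := by
        refine Finset.prod_eq_one fun j hj => ?_
        have hji : j ≠ i := by simpa using (Finset.mem_sdiff.mp hj).2
        rw [Function.update_of_ne hji]
        simp
      rw [h1, Function.update_self, one_mul]
    rw [← himg]
    refine (Finset.sum_subset (Finset.subset_univ _) fun x _ hx => ?_).symm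
    have hex : ∃ j, j ≠ i ∧ x j ≠ z j := by
      by_contra hcon
      push_neg at hcon
      apply hx
      refine Finset.mem_image.mpr ⟨x i, Finset.mem_univ _, ?_⟩
      funext j
      by_cases hji : j = i
      · subst hji; simp
      · rw [Function.update_of_ne hji]
        exact (hcon j hji).symm
    obtain ⟨j, hji, hjx⟩ := hex
    have hz : (∏ j ∈ Finset.univ \ {i}, if x j = z j then (1 : ℝ) else 0) = 0 :=
      Finset.prod_eq_zero (by simp [hji]) (if_neg hjx)
    rw [hz, zero_mul]
  set C : (Fin N → Fin d) → ℝ := fun z => ∑ i, u (z i) i z with hC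
  set M : ℝ := ∑ z, |C z| with hM
  have hM0 : 0 ≤ M := Finset.sum_nonneg fun z _ => abs_nonneg _
  refine ⟨(M + 1)⁻¹, by positivity, fun h hh hhle => ?_⟩
  have hbound : ∀ z, h * |C z| ≤ 1 := by
    intro z
    have h1 : |C z| ≤ M :=
      Finset.single_le_sum (f := fun z => |C z|) (fun z _ => abs_nonneg _) (Finset.mem_univ z)
    calc h * |C z| ≤ (M + 1)⁻¹ * (M + 1) :=
          mul_le_mul hhle (by linarith) (abs_nonneg _) (by positivity)
      _ = 1 := by field_simp
  refine ⟨fun z => ⟨fun x => ?_, ?_⟩, fun x => ?_⟩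
  · -- nonnegativity
    by_cases hxz : x = z
    · subst hxz
      rw [if_pos rfl]
      have heq : ∑ i : Fin N,
          (∏ j ∈ Finset.univ \ {i}, if x j = x j then (1 : ℝ) else 0) * u (x i) i x = C x := by
        simp [hC]
      rw [heq]
      have hb := hbound x
      have hn : h * (-|C x|) ≤ h * C x :=
        mul_le_mul_of_nonneg_left (neg_abs_le (C x)) hh.le
      have : h * (-|C x|) = -(h * |C x|) := by ring
      linarith
    · rw [if_neg hxz, zero_add]
      apply mul_nonneg hh.le
      apply Finset.sum_nonneg
      intro i _
      by_cases hall : ∀ j, j ≠ i → x j = z j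
      · have hxi : x i ≠ z i := by
          intro hcontra
          apply hxz
          funext j
          by_cases hji : j = i
          · subst hji; exact hcontra
          · exact hall j hji
        apply mul_nonneg
        · apply Finset.prod_nonneg
          intro j _
          split <;> norm_num
        · exact hpos z i (x i) hxi
      · push_neg at hall
        obtain ⟨j, hji, hjx⟩ := hall
        have hz : (∏ j ∈ Finset.univ \ {i}, if x j = z j then (1 : ℝ) else 0) = 0 :=
          Finset.prod_eq_zero (by simp [hji]) (if_neg hjx)
        rw [hz, zero_mul]
  · -- sums to one
    rw [Finset.sum_add_distrib]
    have h1 : ∑ x : Fin N → Fin d, (if x = z then (1 : ℝ) else 0) = 1 := by simp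
    have h2 : ∑ x : Fin N → Fin d, ∑ i : Fin N,
        (∏ j ∈ Finset.univ \ {i}, if x j = z j then (1 : ℝ) else 0) * u (x i) i z = 0 := by
      rw [Finset.sum_comm]
      refine Finset.sum_eq_zero fun i _ => ?_
      have hk := key z i (fun a => u a i z)
      simpa [hsum z i] using hk
    rw [h1, ← Finset.mul_sum, h2, mul_zero, add_zero]
  · -- stationarity
    simp only [add_mul]
    rw [Finset.sum_add_distrib]
    have h1 : ∑ z : Fin N → Fin d, (if x = z then (1 : ℝ) else 0) * p z = p x := by
      simp
    have h2 : ∑ z : Fin N → Fin d,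
        h * (∑ i : Fin N,
          (∏ j ∈ Finset.univ \ {i}, if x j = z j then (1 : ℝ) else 0) * u (x i) i z) * p z
        = 0 := by
      have hd2 := hdiv x
      calc ∑ z : Fin N → Fin d,
            h * (∑ i : Fin N,
              (∏ j ∈ Finset.univ \ {i}, if x j = z j then (1 : ℝ) else 0) * u (x i) i z) * p z
          = h * ∑ z : Fin N → Fin d, p z * ∑ i : Fin N,
              (∏ j ∈ Finset.univ \ {i}, if x j = z j then (1 : ℝ) else 0) * u (x i) i z := by
            rw [Finset.mul_sum]
            exact Finset.sum_congr rfl fun z _ => by ring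
        _ = 0 := by rw [hd2, mul_zero]
    rw [h1, h2, add_zero]
end
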